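/- Let G be a graph with distinct vertices v1, v2, v3, v4. Suppose N(v3) ∪ N(v4) ⊆ N[v1] ∪ N[v2], d(v3) + d(v4) − d(v1) − d(v2) = 4, and it is not the case that (v1v2 ∉ E(G) and v3v4 ∈ E(G)). Let U = {v1,v2,v3,v4} and W = ((N(v1)\N(v2)) ∪ (N(v2)\N(v1))) \ U. Then e({v3,v4}, W) − |W| ≥ 4, where e(A,B) counts edges with one end in A and one end in B. -/

import Mathlib

/-- Degree of `v` in `G`. -/
noncomputable def deg {V : Type*} (G : SimpleGraph V) (v : V) : ℕ :=
  Nat.card ↥(G.neighborSet v)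

/-- Degree of `v` in the induced subgraph `G - D` obtained by deleting the vertex set `D`. -/
noncomputable def delDeg {V : Type*} (G : SimpleGraph V) (D : Finset V) (v : V) : ℕ :=
  Nat.card ↥(G.neighborSet v \ ↑D)

/-!
For a vertex `u` compare `f u`, the number of neighbours of `u` in `{v3, v4}`, with `g u`, the
number in `{v1, v2}`. Summed over all vertices these are degree sums, so `∑ f = ∑ g + 4`. On `W`
we have `g = 1`, so it suffices that `∑ f ≤ ∑ g` off `W`. Outside `W` and `U = {v1, v2, v3, v4}`
this holds pointwise: `g u` is `0` or `2`, and `g u = 0` forces `f u = 0` by the covering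
hypothesis.
On `U` both sums count the edges between `{v1, v2}` and `{v3, v4}`, plus `2 [v3 ~ v4]` for `f` and
`2 [v1 ~ v2]` for `g`, and `[v3 ~ v4] ≤ [v1 ~ v2]` by hypothesis.
-/

open Finset

theorem Finset.card_bipartiteBelow_pair {α β : Type*} [DecidableEq α] (r : α → β → Prop)
    [∀ a b, Decidable (r a b)] {a a' : α} (h : a ≠ a') (b : β) :
    #(({a, a'} : Finset α).bipartiteBelow r b) =
      (if r a b then 1 else 0) + (if r a' b then 1 else 0) := by
  rw [bipartiteBelow, card_filter, sum_pair h]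

theorem Finset.add_le_sum_of_sum_eq_add {ι : Type*} [Fintype ι] [DecidableEq ι] {f g : ι → ℕ}
    {k : ℕ} (s : Finset ι) (h : ∑ i, f i = ∑ i, g i + k)
    (hc : ∑ i ∈ sᶜ, f i ≤ ∑ i ∈ sᶜ, g i) : ∑ i ∈ s, g i + k ≤ ∑ i ∈ s, f i := by
  rw [← sum_add_sum_compl s f, ← sum_add_sum_compl s g] at h
  omega

namespace SimpleGraph

variable {V : Type*} (G : SimpleGraph V) [DecidableRel G.Adj]

theorem deg_eq_degree [Fintype V] (v : V) : deg G v = G.degree v := by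
  rw [deg, Nat.card_eq_fintype_card, card_neighborSet_eq_degree]

theorem natCard_adj_pairs_eq_sum [DecidableEq V] (s t : Finset V) :
    Nat.card {p : V × V // p.1 ∈ (s : Set V) ∧ p.2 ∈ (t : Set V) ∧ G.Adj p.1 p.2} =
      ∑ u ∈ t, #(s.bipartiteBelow G.Adj u) := by
  have : {p : V × V | p.1 ∈ (s : Set V) ∧ p.2 ∈ (t : Set V) ∧ G.Adj p.1 p.2} =
      ↑{p ∈ s ×ˢ t | G.Adj p.1 p.2} := by
    ext; simp [and_assoc]
  rw [← Set.coe_ofPred, Nat.card_coe_set_eq, this, Set.ncard_coe_finset, card_filter,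
    sum_product_right]
  simp only [bipartiteBelow, card_filter]

theorem sum_card_bipartiteBelow_adj [Fintype V] (s : Finset V) :
    ∑ u, #(s.bipartiteBelow G.Adj u) = ∑ v ∈ s, G.degree v := by
  rw [← sum_card_bipartiteAbove_eq_sum_card_bipartiteBelow]
  refine sum_congr rfl fun v _ => ?_
  rw [← card_neighborFinset_eq_degree, neighborFinset_eq_filter]
  rfl

theorem sum_card_bipartiteBelow_comm (s t : Finset V) :
    ∑ u ∈ t, #(s.bipartiteBelow G.Adj u) = ∑ u ∈ s, #(t.bipartiteBelow G.Adj u) := by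
  rw [← sum_card_bipartiteAbove_eq_sum_card_bipartiteBelow]
  refine sum_congr rfl fun v _ => ?_
  simp only [bipartiteAbove, bipartiteBelow, G.adj_comm]

variable [DecidableEq V]

theorem sum_card_bipartiteBelow_pair_self {a b : V} (h : a ≠ b) :
    ∑ u ∈ {a, b}, #(({a, b} : Finset V).bipartiteBelow G.Adj u) =
      2 * if G.Adj a b then 1 else 0 := by
  rw [sum_pair h, card_bipartiteBelow_pair _ h, card_bipartiteBelow_pair _ h]
  by_cases hab : G.Adj a b <;> simp [hab, G.adj_comm b a]

variable {v1 v2 v3 v4 : V}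

theorem sum_card_bipartiteBelow_four_le (h12 : v1 ≠ v2) (h34 : v3 ≠ v4)
    (hdisj : Disjoint ({v1, v2} : Finset V) {v3, v4}) (hne : ¬(¬G.Adj v1 v2 ∧ G.Adj v3 v4)) :
    ∑ u ∈ {v1, v2} ∪ {v3, v4}, #(({v3, v4} : Finset V).bipartiteBelow G.Adj u) ≤
      ∑ u ∈ {v1, v2} ∪ {v3, v4}, #(({v1, v2} : Finset V).bipartiteBelow G.Adj u) := by
  rw [sum_union hdisj, sum_union hdisj, sum_card_bipartiteBelow_pair_self G h12,
    sum_card_bipartiteBelow_pair_self G h34, sum_card_bipartiteBelow_comm G {v3, v4}, add_comm]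
  gcongr
  split_ifs <;> tauto

theorem card_bipartiteBelow_le_of_adj_iff_adj (h12 : v1 ≠ v2)
    (hcov : G.neighborSet v3 ∪ G.neighborSet v4 ⊆
      insert v1 (G.neighborSet v1) ∪ insert v2 (G.neighborSet v2))
    {u : V} (hu1 : u ≠ v1) (hu2 : u ≠ v2) (hu : G.Adj v1 u ↔ G.Adj v2 u) :
    #(({v3, v4} : Finset V).bipartiteBelow G.Adj u) ≤
      #(({v1, v2} : Finset V).bipartiteBelow G.Adj u) := by
  by_cases h1 : G.Adj v1 u
  · calc #(({v3, v4} : Finset V).bipartiteBelow G.Adj u) ≤ #({v3, v4} : Finset V) :=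
          card_le_card (filter_subset _ _)
      _ ≤ 2 := card_le_two
      _ = #(({v1, v2} : Finset V).bipartiteBelow G.Adj u) := by
          rw [card_bipartiteBelow_pair _ h12, if_pos h1, if_pos (hu.1 h1)]
  · have h2 : ¬G.Adj v2 u := hu.not.1 h1
    have hP : ({v3, v4} : Finset V).bipartiteBelow G.Adj u = ∅ := by
      refine filter_eq_empty_iff.2 fun v hv hvu => ?_
      have hu34 : u ∈ G.neighborSet v3 ∪ G.neighborSet v4 := by
        rcases mem_insert.1 hv with rfl | hv
        exacts [Or.inl hvu, Or.inr (mem_singleton.1 hv ▸ hvu)]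
      rcases hcov hu34 with (rfl | h) | (rfl | h)
      exacts [hu1 rfl, h1 h, hu2 rfl, h2 h]
    simp [hP]

theorem sum_card_bipartiteBelow_le_of_adj_iff_adj (h12 : v1 ≠ v2) (h34 : v3 ≠ v4)
    (hdisj : Disjoint ({v1, v2} : Finset V) {v3, v4})
    (hcov : G.neighborSet v3 ∪ G.neighborSet v4 ⊆
      insert v1 (G.neighborSet v1) ∪ insert v2 (G.neighborSet v2))
    (hne : ¬(¬G.Adj v1 v2 ∧ G.Adj v3 v4)) {s : Finset V} (hs : {v1, v2} ∪ {v3, v4} ⊆ s)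
    (hadj : ∀ u ∈ s, u ∉ ({v1, v2} ∪ {v3, v4} : Finset V) → (G.Adj v1 u ↔ G.Adj v2 u)) :
    ∑ u ∈ s, #(({v3, v4} : Finset V).bipartiteBelow G.Adj u) ≤
      ∑ u ∈ s, #(({v1, v2} : Finset V).bipartiteBelow G.Adj u) := by
  rw [← sum_sdiff hs, ← sum_sdiff hs]
  refine add_le_add (sum_le_sum fun u hu => ?_)
    (sum_card_bipartiteBelow_four_le G h12 h34 hdisj hne)
  obtain ⟨hus, huU⟩ := mem_sdiff.1 hu
  simp only [mem_union, mem_insert, mem_singleton, not_or] at huU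
  exact card_bipartiteBelow_le_of_adj_iff_adj G h12 hcov huU.1.1 huU.1.2 (hadj u hus (by simp [*]))

theorem card_bipartiteBelow_pair_eq_one {u : V} (h12 : v1 ≠ v2)
    (hu : G.Adj v1 u ↔ ¬G.Adj v2 u) :
    #(({v1, v2} : Finset V).bipartiteBelow G.Adj u) = 1 := by
  rw [card_bipartiteBelow_pair _ h12]
  split_ifs <;> tauto

end SimpleGraph

open SimpleGraph in
/-- The key counting inequality (3): under the covering and degree hypotheses,
`e({v3,v4}, W) ≥ |W| + 4` for `W = (N(v1) Δ N(v2)) \ {v1,v2,v3,v4}`. -/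
theorem stmt_7 {V : Type*} [Fintype V] (G : SimpleGraph V) (v1 v2 v3 v4 : V)
    (hdist : [v1, v2, v3, v4].Pairwise (· ≠ ·))
    (hcov : G.neighborSet v3 ∪ G.neighborSet v4 ⊆
      insert v1 (G.neighborSet v1) ∪ insert v2 (G.neighborSet v2))
    (hdeg : deg G v3 + deg G v4 = deg G v1 + deg G v2 + 4)
    (hne : ¬(¬G.Adj v1 v2 ∧ G.Adj v3 v4)) :
    Nat.card ↥(((G.neighborSet v1 \ G.neighborSet v2) ∪
        (G.neighborSet v2 \ G.neighborSet v1)) \ ({v1, v2, v3, v4} : Set V)) + 4 ≤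
      Nat.card {p : V × V // p.1 ∈ ({v3, v4} : Set V) ∧
        p.2 ∈ ((G.neighborSet v1 \ G.neighborSet v2) ∪
          (G.neighborSet v2 \ G.neighborSet v1)) \ ({v1, v2, v3, v4} : Set V) ∧
        G.Adj p.1 p.2} := by
  classical
  obtain ⟨⟨h12, h13, h14⟩, ⟨h23, h24⟩, h34⟩ :
      (v1 ≠ v2 ∧ v1 ≠ v3 ∧ v1 ≠ v4) ∧ (v2 ≠ v3 ∧ v2 ≠ v4) ∧ v3 ≠ v4 := by
    simpa using hdist
  set W : Finset V := ((G.neighborFinset v1 \ G.neighborFinset v2) ∪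
    (G.neighborFinset v2 \ G.neighborFinset v1)) \ {v1, v2, v3, v4} with hW
  have hWcoe : ((G.neighborSet v1 \ G.neighborSet v2) ∪
      (G.neighborSet v2 \ G.neighborSet v1)) \ ({v1, v2, v3, v4} : Set V) = W := by
    simp [hW]
  rw [hWcoe, ← coe_pair, Nat.card_coe_set_eq, Set.ncard_coe_finset, natCard_adj_pairs_eq_sum]
  have hmemW (u : V) :
      u ∈ W ↔ (G.Adj v1 u ↔ ¬G.Adj v2 u) ∧ u ∉ ({v1, v2} ∪ {v3, v4} : Finset V) := by
    simp [hW]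
    tauto
  calc #W + 4 = ∑ u ∈ W, #(({v1, v2} : Finset V).bipartiteBelow G.Adj u) + 4 := by
        rw [card_eq_sum_ones, sum_congr rfl fun u hu =>
          (card_bipartiteBelow_pair_eq_one G h12 ((hmemW u).1 hu).1).symm]
    _ ≤ ∑ u ∈ W, #(({v3, v4} : Finset V).bipartiteBelow G.Adj u) := by
        refine add_le_sum_of_sum_eq_add W ?_ ?_
        · rw [sum_card_bipartiteBelow_adj, sum_card_bipartiteBelow_adj, sum_pair h12,
            sum_pair h34]
          simpa only [deg_eq_degree] using hdeg
        · refine sum_card_bipartiteBelow_le_of_adj_iff_adj G h12 h34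
            (by simp [h13.symm, h14.symm, h23.symm, h24.symm]) hcov hne
            (fun u hu => mem_compl.2 fun huW => ((hmemW u).1 huW).2 hu) fun u hu huU => ?_
          have := (hmemW u).not.1 (mem_compl.1 hu)
          tauto
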